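/- arXiv:1301.1508 — 2 statements merged into one kernel-verified Lean document; each statement's English description precedes it below -/
import Mathlib

section
/- Let e and E be symmetric positive semidefinite n×n matrices (n ≥ 3) with tr(e) > 0, satisfying ‖e‖ = tr(e), ‖E‖ ≤ tr(E), (e_{23})² = e_{22}e_{33}, and entrywise bounds |e_{ij}|, |E_{ij}| ≤ b. Then |(E_{23})² − E_{22}E_{33}| ≤ C·‖E‖·(1 + tr(E)/tr(e))·√(1 − cos θ_{e,E}), where cos θ_{e,E} = tr(eE)/(‖e‖‖E‖) and C depends only on b. -/
/-!
Normalised to unit Frobenius norm, `e` and `E` are at squared distance `2 (1 - cos θ)`, so every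
entry of `E / ‖E‖` lies within `√(2 (1 - cos θ))` of the corresponding entry of `e / ‖e‖`.
Since the minor `e_ij² - e_ii e_jj` vanishes, the minor of `E` telescopes into three terms, each a
product of one such entry difference with entries bounded by `b`.
-/

/-- Frobenius norm of a square matrix. -/
noncomputable def frob {n : ℕ} (M : Matrix (Fin n) (Fin n) ℝ) : ℝ :=
  Real.sqrt (∑ i, ∑ j, (M i j) ^ 2)

open Finset

lemma sq_le_sum_sum_sq {ι κ : Type*} [Fintype ι] [Fintype κ] (f : ι → κ → ℝ) (i : ι) (j : κ) :
    f i j ^ 2 ≤ ∑ i', ∑ j', f i' j' ^ 2 :=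
  calc f i j ^ 2 ≤ ∑ j', f i j' ^ 2 :=
        single_le_sum (fun _ _ => sq_nonneg _) (mem_univ j)
    _ ≤ ∑ i', ∑ j', f i' j' ^ 2 :=
        single_le_sum (f := fun i' => ∑ j', f i' j' ^ 2)
          (fun _ _ => sum_nonneg fun _ _ => sq_nonneg _) (mem_univ i)

lemma Matrix.trace_mul_eq_sum_sum_of_isSymm {ι R : Type*} [Fintype ι]
    [NonUnitalNonAssocSemiring R] (A B : Matrix ι ι R) (hB : B.IsSymm) :
    (A * B).trace = ∑ i, ∑ j, A i j * B i j := by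
  simp only [Matrix.trace, Matrix.diag_apply, Matrix.mul_apply, hB.apply]

section Frobenius

variable {n : ℕ}

lemma frob_sq (M : Matrix (Fin n) (Fin n) ℝ) : frob M ^ 2 = ∑ i, ∑ j, M i j ^ 2 :=
  Real.sq_sqrt (by positivity)

lemma sum_sum_sq_frob_mul_sub_frob_mul (A B : Matrix (Fin n) (Fin n) ℝ) :
    ∑ i, ∑ j, (frob B * A i j - frob A * B i j) ^ 2 =
      (frob A * frob B) ^ 2 * (2 * (1 - (∑ i, ∑ j, A i j * B i j) / (frob A * frob B))) := by
  have hcross : (frob A * frob B) ^ 2 * ((∑ i, ∑ j, A i j * B i j) / (frob A * frob B)) =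
      frob A * frob B * ∑ i, ∑ j, A i j * B i j := by
    rcases eq_or_ne (frob A * frob B) 0 with h | h
    · simp [h]
    · field_simp
  have hexpand : ∀ i j, (frob B * A i j - frob A * B i j) ^ 2 =
      frob B ^ 2 * A i j ^ 2 + frob A ^ 2 * B i j ^ 2 - 2 * (frob A * frob B) * (A i j * B i j) :=
    fun i j => by ring
  simp only [hexpand, sum_add_distrib, sum_sub_distrib, ← mul_sum, ← frob_sq]
  linear_combination 2 * hcross

lemma abs_frob_mul_sub_frob_mul_le (A B : Matrix (Fin n) (Fin n) ℝ) (i j : Fin n) :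
    |frob B * A i j - frob A * B i j| ≤
      frob A * frob B * Real.sqrt (2 * (1 - (∑ i, ∑ j, A i j * B i j) / (frob A * frob B))) := by
  have hAB : 0 ≤ frob A * frob B := mul_nonneg (Real.sqrt_nonneg _) (Real.sqrt_nonneg _)
  calc |frob B * A i j - frob A * B i j|
      ≤ Real.sqrt ((frob A * frob B) ^ 2 *
          (2 * (1 - (∑ i, ∑ j, A i j * B i j) / (frob A * frob B)))) := by
        rw [← sum_sum_sq_frob_mul_sub_frob_mul]
        exact Real.abs_le_sqrt (sq_le_sum_sum_sq (fun i j => frob B * A i j - frob A * B i j) i j)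
    _ = _ := by rw [Real.sqrt_mul (sq_nonneg _), Real.sqrt_sq hAB]

end Frobenius

lemma sq_mul_abs_sq_sub_mul_le {s S b D x₁ x₂ x₃ y₁ y₂ y₃ : ℝ} (hs : 0 ≤ s) (hS : 0 ≤ S)
    (hx : x₃ ^ 2 = x₁ * x₂) (hx₁ : |x₁| ≤ b) (hx₃ : |x₃| ≤ b) (hy₂ : |y₂| ≤ b) (hy₃ : |y₃| ≤ b)
    (h₁ : |S * x₁ - s * y₁| ≤ D) (h₂ : |S * x₂ - s * y₂| ≤ D) (h₃ : |S * x₃ - s * y₃| ≤ D) :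
    s ^ 2 * |y₃ ^ 2 - y₁ * y₂| ≤ 2 * b * D * (s + S) := by
  have hsplit : s ^ 2 * (y₃ ^ 2 - y₁ * y₂) = -(S * x₃ - s * y₃) * (s * y₃ + S * x₃)
      + (S * x₁ - s * y₁) * (s * y₂) + S * x₁ * (S * x₂ - s * y₂) := by
    linear_combination S ^ 2 * hx
  rw [← abs_of_nonneg (sq_nonneg s), ← abs_mul, hsplit]
  have hsum : |s * y₃ + S * x₃| ≤ s * b + S * b := by
    refine (abs_add_le _ _).trans (add_le_add ?_ ?_) <;>
      rw [abs_mul, abs_of_nonneg (by assumption)] <;> gcongr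
  have hsy₂ : |s * y₂| ≤ s * b := by rw [abs_mul, abs_of_nonneg hs]; gcongr
  have hSx₁ : |S * x₁| ≤ S * b := by rw [abs_mul, abs_of_nonneg hS]; gcongr
  calc _ ≤ |S * x₃ - s * y₃| * |s * y₃ + S * x₃| + |S * x₁ - s * y₁| * |s * y₂|
        + |S * x₁| * |S * x₂ - s * y₂| := by
        simp only [← abs_mul, ← abs_neg (S * x₃ - s * y₃)]
        exact abs_add_three _ _ _
    _ ≤ D * (s * b + S * b) + D * (s * b) + S * b * D := by
        gcongr <;> exact (abs_nonneg _).trans ‹_›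
    _ = 2 * b * D * (s + S) := by ring

/-- For symmetric PSD matrices `e, E` with `tr e > 0`, `‖e‖ = tr e`, `‖E‖ ≤ tr E`,
`(e_{ij})² = e_{ii}e_{jj}`, and entrywise bounds by `b`, the difference of 2×2 minors
of `E` is controlled by the angular deviation between `e` and `E`:
`|(E_{ij})² − E_{ii}E_{jj}| ≤ C‖E‖(1 + tr E/tr e)√(1 − cos θ_{e,E})`,
with `C` depending only on `b`. -/
theorem stmt14 (b : ℝ) (hb : 0 < b) :
    ∃ C : ℝ, 0 < C ∧
      ∀ (n : ℕ) (i j : Fin n) (e E : Matrix (Fin n) (Fin n) ℝ),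
        e.PosSemidef → E.PosSemidef → 0 < e.trace →
        frob e = e.trace → frob E ≤ E.trace →
        (e i j) ^ 2 = e i i * e j j →
        (∀ i' j', |e i' j'| ≤ b ∧ |E i' j'| ≤ b) →
        |(E i j) ^ 2 - E i i * E j j| ≤
          C * frob E * (1 + E.trace / e.trace) *
            Real.sqrt (1 - (e * E).trace / (frob e * frob E)) := by
  refine ⟨2 * Real.sqrt 2 * b, by positivity, ?_⟩
  intro n i j e E _ hE htr hfe hfE hij hbd
  rw [← hfe, e.trace_mul_eq_sum_sum_of_isSymm E (Matrix.isHermitian_iff_isSymm.mp hE.isHermitian)]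
  set s := frob e
  set S := frob E
  set ρ := Real.sqrt (1 - (∑ k, ∑ l, e k l * E k l) / (s * S))
  have hs : 0 < s := hfe ▸ htr
  have hS : 0 ≤ S := Real.sqrt_nonneg _
  have hclose : ∀ k l, |S * e k l - s * E k l| ≤ s * S * (Real.sqrt 2 * ρ) := fun k l => by
    simpa only [Real.sqrt_mul zero_le_two] using abs_frob_mul_sub_frob_mul_le e E k l
  have hminor := sq_mul_abs_sq_sub_mul_le hs.le hS hij (hbd i i).1 (hbd i j).1 (hbd j j).2
    (hbd i j).2 (hclose i i) (hclose j j) (hclose i j)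
  have hrescale : s ^ 2 * (2 * Real.sqrt 2 * b * S * (1 + E.trace / s) * ρ) =
      2 * b * (s * S * (Real.sqrt 2 * ρ)) * (s + E.trace) := by
    field_simp
  refine le_of_mul_le_mul_left (hminor.trans ?_) (pow_pos hs 2)
  rw [hrescale]
  gcongr
end

section
/- Suppose n×n symmetric positive semidefinite matrices e, E satisfy: tr(e) ≥ β₁p² for some p > 0 and β₁ > 0; ‖e‖ = tr(e) and ‖E‖ ≤ tr(E) (Frobenius norm); |(E_{23})² − E_{22}E_{33}| ≥ c r² for some c, r > 0; and the bound (from the previous inequality) √(1 − cos θ_{e,E})·‖E‖ ≥ c' r²/(1 + tr(E)/tr(e)) for some c' > 0. If additionally tr(e), tr(E) ≤ B, then (tr(e)·tr(E) − tr(eE))/tr(e)² ≥ C p² r⁴ where C > 0 depends only on c', β₁, B. -/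
open Matrix

lemma frob_nonneg {n : ℕ} (M : Matrix (Fin n) (Fin n) ℝ) : 0 ≤ frob M := Real.sqrt_nonneg _

lemma frob_eq_sqrt_sum_prod {n : ℕ} (M : Matrix (Fin n) (Fin n) ℝ) :
    frob M = √(∑ q : Fin n × Fin n, M q.1 q.2 ^ 2) := by
  rw [frob, Fintype.sum_prod_type]

lemma frob_transpose {n : ℕ} (M : Matrix (Fin n) (Fin n) ℝ) : frob Mᵀ = frob M := by
  rw [frob, frob, Finset.sum_comm]
  rfl

lemma trace_mul_le_frob_mul_frob {n : ℕ} (A B : Matrix (Fin n) (Fin n) ℝ) :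
    (A * B).trace ≤ frob A * frob B := by
  have htrace : (A * B).trace = ∑ q : Fin n × Fin n, A q.1 q.2 * Bᵀ q.1 q.2 := by
    simp only [Matrix.trace, Matrix.diag, Matrix.mul_apply, Matrix.transpose_apply,
      Fintype.sum_prod_type]
  rw [htrace, ← frob_transpose B, frob_eq_sqrt_sum_prod, frob_eq_sqrt_sum_prod]
  exact Real.sum_mul_le_sqrt_mul_sqrt _ _ _

lemma sq_le_mul_sub_of_le_sqrt_one_sub_div_mul {t T F τ L : ℝ} (ht : 0 < t) (hF : 0 ≤ F)
    (hFT : F ≤ T) (hτ : τ ≤ t * F) (hL : 0 ≤ L) (h : L ≤ √(1 - τ / (t * F)) * F) :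
    L ^ 2 ≤ T * (T - τ / t) := by
  rcases hF.eq_or_lt with rfl | hF
  · simp only [mul_zero] at h
    have hτt : τ / t ≤ 0 := by rw [div_le_iff₀ ht]; linarith
    nlinarith
  have hcos : τ / (t * F) ≤ 1 := (div_le_one₀ (by positivity)).2 hτ
  have hτt : τ / t ≤ F := by rw [div_le_iff₀ ht]; linarith
  calc L ^ 2 ≤ (√(1 - τ / (t * F)) * F) ^ 2 := pow_le_pow_left₀ hL h 2
    _ = F * (F - τ / t) := by
      rw [mul_pow, Real.sq_sqrt (by linarith)]
      field_simp
    _ ≤ T * (T - τ / t) := mul_le_mul hFT (by linarith) (by linarith) (hF.le.trans hFT)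

lemma mul_div_le_div_sq_of_sq_div_le {a t T τ B : ℝ} (ht : 0 < t) (htB : t ≤ B) (hT : 0 ≤ T)
    (hTB : T ≤ B) (hτ : τ ≤ t * T) (h : (a / (1 + T / t)) ^ 2 ≤ T * (T - τ / t)) :
    a ^ 2 * t / (4 * B ^ 3) ≤ (t * T - τ) / t ^ 2 := by
  have hB : 0 < B := ht.trans_le htB
  have hX : 0 ≤ (t * T - τ) / t ^ 2 := div_nonneg (by linarith) (by positivity)
  have hsum : (t + T) ^ 2 ≤ 4 * B ^ 2 := by nlinarith
  have hL : (a / (1 + T / t)) ^ 2 = a ^ 2 * t ^ 2 / (t + T) ^ 2 := by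
    field_simp
  have hR : T * (T - τ / t) = t * T * ((t * T - τ) / t ^ 2) := by
    field_simp
  have : a ^ 2 * t ^ 2 / (4 * B ^ 2) ≤ t * B * ((t * T - τ) / t ^ 2) := calc
    a ^ 2 * t ^ 2 / (4 * B ^ 2) ≤ a ^ 2 * t ^ 2 / (t + T) ^ 2 := by gcongr
    _ ≤ t * T * ((t * T - τ) / t ^ 2) := hL ▸ hR ▸ h
    _ ≤ t * B * ((t * T - τ) / t ^ 2) := by gcongr
  rw [div_le_iff₀ (by positivity)] at this ⊢
  nlinarith

/-- Chaining of inequalities in the proof of Theorem 2.6: under the stated bounds on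
the PSD matrices `e, E` one gets the quantitative positivity
`(tr(e)tr(E) − tr(eE))/tr(e)² ≥ C p² r⁴` with `C` depending only on `c'`, `β₁`, `B`. -/
theorem stmt18 (c' β₁ B : ℝ) (hc' : 0 < c') (hβ₁ : 0 < β₁) (hB : 0 < B) :
    ∃ C : ℝ, 0 < C ∧
      ∀ (n : ℕ) (i j : Fin n) (p r c : ℝ) (e E : Matrix (Fin n) (Fin n) ℝ),
        0 < p → 0 < r → 0 < c →
        e.PosSemidef → E.PosSemidef →
        β₁ * p ^ 2 ≤ e.trace →
        frob e = e.trace → frob E ≤ E.trace →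
        c * r ^ 2 ≤ |(E i j) ^ 2 - E i i * E j j| →
        c' * r ^ 2 / (1 + E.trace / e.trace) ≤
          Real.sqrt (1 - (e * E).trace / (frob e * frob E)) * frob E →
        e.trace ≤ B → E.trace ≤ B →
        C * p ^ 2 * r ^ 4 ≤ (e.trace * E.trace - (e * E).trace) / e.trace ^ 2 := by
  refine ⟨c' ^ 2 * β₁ / (4 * B ^ 3), by positivity, ?_⟩
  intro n i j p r c e E hp hr _ _ _ hβe hfe hFE _ hangle heB hEB
  have he : 0 < e.trace := lt_of_lt_of_le (by positivity) hβe
  have hF := frob_nonneg E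
  have hCS : (e * E).trace ≤ e.trace * frob E := hfe ▸ trace_mul_le_frob_mul_frob e E
  have hL : 0 ≤ c' * r ^ 2 / (1 + E.trace / e.trace) :=
    div_nonneg (by positivity) (by linarith [div_nonneg (hF.trans hFE) he.le])
  rw [hfe] at hangle
  have key := mul_div_le_div_sq_of_sq_div_le he heB (hF.trans hFE) hEB
    (hCS.trans (by gcongr))
    (sq_le_mul_sub_of_le_sqrt_one_sub_div_mul he hF hFE hCS hL hangle)
  calc c' ^ 2 * β₁ / (4 * B ^ 3) * p ^ 2 * r ^ 4
      = (c' * r ^ 2) ^ 2 * (β₁ * p ^ 2) / (4 * B ^ 3) := by ring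
    _ ≤ (c' * r ^ 2) ^ 2 * e.trace / (4 * B ^ 3) := by gcongr
    _ ≤ _ := key
end
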